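/- Let d ≥ 1, α ∈ (0,1] and β ∈ (0, α). Let a : ℝ → ℝ be twice differentiable with a, a', a'' bounded. There is a constant C depending only on d, α and β such that for every bounded continuous f : ℝ^d → ℝ with finite Hölder seminorm [f]_{C^α} and every T ∈ (0,1], ‖a ∘ f − a ∘ (P_T f)‖_{C^β} ≤ C ‖a‖_{C^2} (1 + ‖f‖_{C^α}) ‖f‖_{C^α} T^{(α−β)/2}. -/

import Mathlib

/-! `P_T f` averages the translates `f (· - z)` against a Gaussian probability density, so it
has the same Hölder seminorm as `f`, and `|P_T f - f| ≤ C [f]_α T^{α/2}` because the `α`-th moment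
of the Gaussian of variance `~ T` is `~ T^{α/2}`. As `a` is Lipschitz with constant `sup |a'|`,
`g = a ∘ f - a ∘ P_T f` is then bounded by `C T^{α/2}` and `α`-Hölder; using the sup bound when
`|x - y| ≥ √T` and the Hölder bound when `|x - y| ≤ √T` gives the `β`-Hölder bound with the factor
`T^{(α-β)/2}`. -/

open scoped ENNReal

/-- The sup norm `sup_x |f x|`, valued in `ℝ≥0∞`. -/
noncomputable def supN {X : Type*} (f : X → ℝ) : ℝ≥0∞ :=
  ⨆ x, ENNReal.ofReal |f x|

/-- The Hölder seminorm `[f]_{C^γ} = sup_{x ≠ y} |f x - f y| / |x - y|^γ`, valued in `ℝ≥0∞`. -/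
noncomputable def hSemi {X : Type*} [MetricSpace X] (γ : ℝ) (f : X → ℝ) : ℝ≥0∞ :=
  ⨆ (x : X) (y : X) (_ : x ≠ y), ENNReal.ofReal (|f x - f y| / dist x y ^ γ)

/-- The Hölder norm `‖f‖_{C^γ} = sup_x |f x| + [f]_{C^γ}`. -/
noncomputable def hNorm {X : Type*} [MetricSpace X] (γ : ℝ) (f : X → ℝ) : ℝ≥0∞ :=
  supN f + hSemi γ f

/-- The `C^2` norm of `a : ℝ → ℝ`: `sup |a| + sup |a'| + sup |a''|`. -/
noncomputable def c2Norm (a : ℝ → ℝ) : ℝ≥0∞ :=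
  supN a + supN (deriv a) + supN (deriv (deriv a))

/-- The heat semigroup on `ℝ^d`:
`(P_t f)(x) = ∫ (4πt)^{-d/2} exp(-|x-y|²/(4t)) f(y) dy`. -/
noncomputable def heat (d : ℕ) (t : ℝ) (f : EuclideanSpace ℝ (Fin d) → ℝ)
    (x : EuclideanSpace ℝ (Fin d)) : ℝ :=
  ∫ y, (4 * Real.pi * t) ^ (-(d : ℝ) / 2) * Real.exp (-‖x - y‖ ^ 2 / (4 * t)) * f y

open MeasureTheory Real

section HolderBounds

variable {X : Type*} {g : X → ℝ}

lemma abs_le_toReal_supN (h : supN g ≠ ⊤) (x : X) : |g x| ≤ (supN g).toReal :=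
  (ENNReal.ofReal_le_iff_le_toReal h).1 (le_iSup (fun x => ENNReal.ofReal |g x|) x)

variable [MetricSpace X]

lemma abs_sub_le_toReal_hSemi_mul {γ : ℝ} (hγ : 0 < γ) (h : hSemi γ g ≠ ⊤) (x y : X) :
    |g x - g y| ≤ (hSemi γ g).toReal * dist x y ^ γ := by
  rcases eq_or_ne x y with rfl | hxy
  · simp [zero_rpow hγ.ne']
  rw [← div_le_iff₀ (rpow_pos_of_pos (dist_pos.2 hxy) γ)]
  exact (ENNReal.ofReal_le_iff_le_toReal h).1 (le_iSup₂_of_le x y (le_iSup_of_le hxy le_rfl))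

lemma hNorm_le_ofReal_add {γ S H : ℝ} (hS : ∀ x, |g x| ≤ S)
    (hH : ∀ x y, |g x - g y| ≤ H * dist x y ^ γ) :
    hNorm γ g ≤ ENNReal.ofReal S + ENNReal.ofReal H := by
  refine add_le_add (iSup_le fun x => ENNReal.ofReal_le_ofReal (hS x))
    (iSup₂_le fun x y => iSup_le fun hxy => ENNReal.ofReal_le_ofReal ?_)
  rw [div_le_iff₀ (rpow_pos_of_pos (dist_pos.2 hxy) γ)]
  exact hH x y

lemma abs_sub_le_of_abs_le_of_holder {A B δ α β : ℝ} (hA : 0 ≤ A) (hB : 0 ≤ B)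
    (hδ : 0 < δ) (hβ : 0 ≤ β) (hβα : β ≤ α) (hsup : ∀ x, |g x| ≤ A * δ ^ α)
    (hhol : ∀ x y, |g x - g y| ≤ B * dist x y ^ α) (x y : X) :
    |g x - g y| ≤ (2 * A + B) * δ ^ (α - β) * dist x y ^ β := by
  have hδβ : 0 ≤ δ ^ (α - β) := rpow_nonneg hδ.le _
  rcases eq_or_ne x y with rfl | hxy
  · simpa using mul_nonneg (mul_nonneg (by positivity) hδβ) (rpow_nonneg le_rfl β)
  have hr : 0 < dist x y := dist_pos.2 hxy
  have hrβ : 0 ≤ dist x y ^ β := rpow_nonneg hr.le _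
  rcases le_total δ (dist x y) with hfar | hnear
  · calc |g x - g y| ≤ |g x| + |g y| := abs_sub _ _
      _ ≤ 2 * A * (δ ^ (α - β) * δ ^ β) := by
        rw [← rpow_add hδ, sub_add_cancel]; linarith [hsup x, hsup y]
      _ ≤ 2 * A * (δ ^ (α - β) * dist x y ^ β) := by gcongr
      _ ≤ (2 * A + B) * δ ^ (α - β) * dist x y ^ β := by nlinarith [mul_nonneg hδβ hrβ]
  · calc |g x - g y| ≤ B * (dist x y ^ (α - β) * dist x y ^ β) := by
          rw [← rpow_add hr, sub_add_cancel]; exact hhol x y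
      _ ≤ B * (δ ^ (α - β) * dist x y ^ β) := by gcongr
      _ ≤ (2 * A + B) * δ ^ (α - β) * dist x y ^ β := by nlinarith [mul_nonneg hδβ hrβ]

lemma hNorm_le_of_abs_le_of_holder {A B δ α β : ℝ} (hA : 0 ≤ A) (hB : 0 ≤ B)
    (hδ0 : 0 < δ) (hδ1 : δ ≤ 1) (hβ : 0 ≤ β) (hβα : β ≤ α)
    (hsup : ∀ x, |g x| ≤ A * δ ^ α) (hhol : ∀ x y, |g x - g y| ≤ B * dist x y ^ α) :
    hNorm β g ≤ ENNReal.ofReal ((3 * A + B) * δ ^ (α - β)) := by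
  have hδα : δ ^ α ≤ δ ^ (α - β) := rpow_le_rpow_of_exponent_ge hδ0 hδ1 (by linarith)
  have hδβ : 0 ≤ δ ^ (α - β) := rpow_nonneg hδ0.le _
  calc hNorm β g
      ≤ ENNReal.ofReal (A * δ ^ (α - β)) + ENNReal.ofReal ((2 * A + B) * δ ^ (α - β)) :=
        hNorm_le_ofReal_add (fun x => (hsup x).trans (by gcongr))
          (abs_sub_le_of_abs_le_of_holder hA hB hδ0 hβ hβα hsup hhol)
    _ = ENNReal.ofReal ((3 * A + B) * δ ^ (α - β)) := by
        rw [← ENNReal.ofReal_add (by positivity) (by positivity)]; ring_nf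

lemma hNorm_comp_sub_comp_le {a : ℝ → ℝ} {u v : X → ℝ} {K L S δ α β : ℝ}
    (hK : 0 ≤ K) (hL : 0 ≤ L) (hS : 0 ≤ S) (hδ0 : 0 < δ) (hδ1 : δ ≤ 1) (hβ : 0 ≤ β)
    (hβα : β ≤ α) (ha : ∀ s t, |a s - a t| ≤ K * |s - t|)
    (huv : ∀ x, |u x - v x| ≤ S * δ ^ α) (hu : ∀ x y, |u x - u y| ≤ L * dist x y ^ α)
    (hv : ∀ x y, |v x - v y| ≤ L * dist x y ^ α) :
    hNorm β (fun x => a (u x) - a (v x)) ≤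
      ENNReal.ofReal ((3 * S + 2 * L) * K * δ ^ (α - β)) := by
  have hsup : ∀ x, |a (u x) - a (v x)| ≤ K * S * δ ^ α := fun x =>
    (ha _ _).trans ((mul_le_mul_of_nonneg_left (huv x) hK).trans_eq (mul_assoc _ _ _).symm)
  have hhol : ∀ x y, |a (u x) - a (v x) - (a (u y) - a (v y))| ≤ 2 * K * L * dist x y ^ α :=
    fun x y => calc
      _ ≤ |a (u x) - a (u y)| + |a (v x) - a (v y)| := by rw [sub_sub_sub_comm]; exact abs_sub _ _
      _ ≤ K * (L * dist x y ^ α) + K * (L * dist x y ^ α) := by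
        gcongr
        · exact (ha _ _).trans (by gcongr; exact hu x y)
        · exact (ha _ _).trans (by gcongr; exact hv x y)
      _ = 2 * K * L * dist x y ^ α := by ring
  convert hNorm_le_of_abs_le_of_holder (by positivity) (by positivity) hδ0 hδ1 hβ hβα hsup hhol
    using 2
  ring

end HolderBounds

lemma rpow_le_eight_mul_exp_sq_div_eight {v α : ℝ} (hv : 0 ≤ v) (hα0 : 0 ≤ α)
    (hα2 : α ≤ 2) :
    v ^ α ≤ 8 * exp (v ^ 2 / 8) := by
  have hpoly : v ^ α ≤ 1 + v ^ 2 := by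
    rcases le_total v 1 with h | h
    · linarith [rpow_le_one hv h hα0, sq_nonneg v]
    · calc v ^ α ≤ v ^ (2 : ℝ) := rpow_le_rpow_of_exponent_le h hα2
        _ ≤ 1 + v ^ 2 := by rw [rpow_two]; linarith
  linarith [add_one_le_exp (v ^ 2 / 8)]

lemma rpow_mul_exp_neg_sq_div_le {r α T : ℝ} (hr : 0 ≤ r) (hT : 0 < T) (hα0 : 0 ≤ α)
    (hα2 : α ≤ 2) :
    r ^ α * exp (-r ^ 2 / (8 * T)) ≤ 8 * √T ^ α := by
  have hsT : 0 < √T := sqrt_pos.2 hT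
  set v := r / √T
  have hr_eq : r ^ α = v ^ α * √T ^ α := by
    rw [← mul_rpow (div_nonneg hr hsT.le) hsT.le, div_mul_cancel₀ _ hsT.ne']
  have hexp : -r ^ 2 / (8 * T) = -(v ^ 2 / 8) := by
    rw [div_pow, sq_sqrt hT.le]; field_simp
  rw [hexp, exp_neg, ← div_eq_mul_inv, div_le_iff₀ (exp_pos _), hr_eq]
  nlinarith [rpow_le_eight_mul_exp_sq_div_eight (div_nonneg hr hsT.le) hα0 hα2,
    rpow_nonneg hsT.le α]

section HeatKernel

variable {d : ℕ} {T : ℝ}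

noncomputable def heatKernel (d : ℕ) (t : ℝ) (z : EuclideanSpace ℝ (Fin d)) : ℝ :=
  (4 * π * t) ^ (-(d : ℝ) / 2) * exp (-‖z‖ ^ 2 / (4 * t))

lemma heat_eq_integral_heatKernel_mul (f : EuclideanSpace ℝ (Fin d) → ℝ)
    (x : EuclideanSpace ℝ (Fin d)) :
    heat d T f x = ∫ z, heatKernel d T z * f (x - z) := by
  rw [heat, ← integral_sub_left_eq_self (fun z => heatKernel d T z * f (x - z)) volume x]
  simp only [heatKernel, sub_sub_cancel]

lemma heatKernel_nonneg (hT : 0 < T) (z : EuclideanSpace ℝ (Fin d)) : 0 ≤ heatKernel d T z := by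
  unfold heatKernel; positivity

lemma integral_heatKernel (hT : 0 < T) : ∫ z, heatKernel d T z = 1 := by
  have h4T : 0 < 4 * π * T := by positivity
  calc ∫ z, heatKernel d T z
      = ∫ z : EuclideanSpace ℝ (Fin d),
          (4 * π * T) ^ (-(d : ℝ) / 2) * exp (-(4 * T)⁻¹ * ‖z‖ ^ 2) := by
        simp only [heatKernel, div_eq_inv_mul, mul_neg, neg_mul]
    _ = (4 * π * T) ^ (-(d : ℝ) / 2) * (4 * π * T) ^ ((d : ℝ) / 2) := by
        rw [integral_const_mul, GaussianFourier.integral_rexp_neg_mul_sq_norm (by positivity),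
          finrank_euclideanSpace_fin, div_inv_eq_mul]
        ring_nf
    _ = 1 := by rw [← rpow_add h4T, neg_div, neg_add_cancel, rpow_zero]

lemma integrable_heatKernel (hT : 0 < T) : Integrable (heatKernel d T) :=
  Integrable.of_integral_ne_zero (by rw [integral_heatKernel hT]; exact one_ne_zero)

lemma integrable_heatKernel_mul (hT : 0 < T) {f : EuclideanSpace ℝ (Fin d) → ℝ}
    (hf : Continuous f) {M : ℝ} (hM : ∀ x, |f x| ≤ M) :
    Integrable (fun z => heatKernel d T z * f z) :=
  (integrable_heatKernel hT).mul_bdd hf.aestronglyMeasurable (.of_forall hM)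

lemma heatKernel_eq_mul_heatKernel_two_mul (hT : 0 < T) (z : EuclideanSpace ℝ (Fin d)) :
    heatKernel d T z =
      2 ^ ((d : ℝ) / 2) * heatKernel d (2 * T) z * exp (-‖z‖ ^ 2 / (8 * T)) := by
  have h4T : 0 < 4 * π * T := by positivity
  have hpow : (4 * π * (2 * T)) ^ (-(d : ℝ) / 2) =
      2 ^ (-(d : ℝ) / 2) * (4 * π * T) ^ (-(d : ℝ) / 2) := by
    rw [← mul_rpow zero_le_two h4T.le]; ring_nf
  have hexp : exp (-‖z‖ ^ 2 / (4 * T)) =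
      exp (-‖z‖ ^ 2 / (4 * (2 * T))) * exp (-‖z‖ ^ 2 / (8 * T)) := by
    rw [← exp_add]; congr 1; field_simp; ring
  have htwo : (2 : ℝ) ^ ((d : ℝ) / 2) * 2 ^ (-(d : ℝ) / 2) = 1 := by
    rw [← rpow_add zero_lt_two, neg_div, add_neg_cancel, rpow_zero]
  rw [heatKernel, heatKernel, hpow, hexp]
  linear_combination (-(4 * π * T) ^ (-(d : ℝ) / 2) * exp (-‖z‖ ^ 2 / (4 * (2 * T))) *
    exp (-‖z‖ ^ 2 / (8 * T))) * htwo


variable {α : ℝ}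

-- Half of the Gaussian decay absorbs `‖z‖ ^ α`; the other half is the heat kernel at time `2T`.
lemma heatKernel_mul_rpow_le (hT : 0 < T) (hα0 : 0 ≤ α) (hα2 : α ≤ 2)
    (z : EuclideanSpace ℝ (Fin d)) :
    heatKernel d T z * ‖z‖ ^ α ≤
      8 * 2 ^ ((d : ℝ) / 2) * √T ^ α * heatKernel d (2 * T) z := by
  rw [heatKernel_eq_mul_heatKernel_two_mul hT]
  have hk : 0 ≤ 2 ^ ((d : ℝ) / 2) * heatKernel d (2 * T) z :=
    mul_nonneg (by positivity) (heatKernel_nonneg (by positivity) z)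
  calc 2 ^ ((d : ℝ) / 2) * heatKernel d (2 * T) z * exp (-‖z‖ ^ 2 / (8 * T)) * ‖z‖ ^ α
      = 2 ^ ((d : ℝ) / 2) * heatKernel d (2 * T) z *
          (‖z‖ ^ α * exp (-‖z‖ ^ 2 / (8 * T))) := by ring
    _ ≤ 2 ^ ((d : ℝ) / 2) * heatKernel d (2 * T) z * (8 * √T ^ α) :=
        mul_le_mul_of_nonneg_left (rpow_mul_exp_neg_sq_div_le (norm_nonneg z) hT hα0 hα2) hk
    _ = 8 * 2 ^ ((d : ℝ) / 2) * √T ^ α * heatKernel d (2 * T) z := by ring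

lemma integrable_heatKernel_mul_rpow (hT : 0 < T) (hα0 : 0 ≤ α) (hα2 : α ≤ 2) :
    Integrable (fun z : EuclideanSpace ℝ (Fin d) => heatKernel d T z * ‖z‖ ^ α) := by
  refine ((integrable_heatKernel (d := d) (T := 2 * T) (by positivity)).const_mul
    (8 * 2 ^ ((d : ℝ) / 2) * √T ^ α)).mono' ?_ (.of_forall fun z => ?_)
  · exact (integrable_heatKernel hT).aestronglyMeasurable.mul
      (continuous_norm.rpow_const fun _ => Or.inr hα0).aestronglyMeasurable
  · rw [norm_of_nonneg (mul_nonneg (heatKernel_nonneg hT z) (rpow_nonneg (norm_nonneg z) α))]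
    exact heatKernel_mul_rpow_le hT hα0 hα2 z

lemma integral_heatKernel_mul_rpow_le (hT : 0 < T) (hα0 : 0 ≤ α) (hα2 : α ≤ 2) :
    ∫ z : EuclideanSpace ℝ (Fin d), heatKernel d T z * ‖z‖ ^ α ≤
      8 * 2 ^ ((d : ℝ) / 2) * √T ^ α := by
  calc ∫ z : EuclideanSpace ℝ (Fin d), heatKernel d T z * ‖z‖ ^ α
      ≤ ∫ z, 8 * 2 ^ ((d : ℝ) / 2) * √T ^ α * heatKernel d (2 * T) z :=
        integral_mono (integrable_heatKernel_mul_rpow hT hα0 hα2)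
          ((integrable_heatKernel (by positivity)).const_mul _)
          (heatKernel_mul_rpow_le hT hα0 hα2)
    _ = 8 * 2 ^ ((d : ℝ) / 2) * √T ^ α := by
        rw [integral_const_mul, integral_heatKernel (by positivity), mul_one]

variable {f : EuclideanSpace ℝ (Fin d) → ℝ} {M L : ℝ}

lemma abs_heat_sub_le (hT : 0 < T) (hf : Continuous f) (hM : ∀ x, |f x| ≤ M)
    (hα0 : 0 ≤ α) (hα2 : α ≤ 2) (hL : 0 ≤ L)
    (hLf : ∀ x y, |f x - f y| ≤ L * dist x y ^ α) (x : EuclideanSpace ℝ (Fin d)) :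
    |heat d T f x - f x| ≤ 8 * 2 ^ ((d : ℝ) / 2) * L * √T ^ α := by
  have hshift : Integrable (fun z => heatKernel d T z * f (x - z)) :=
    integrable_heatKernel_mul hT (hf.comp (continuous_const.sub continuous_id)) fun _ => hM _
  have hconst : ∫ z, heatKernel d T z * f x = f x := by
    rw [integral_mul_const, integral_heatKernel hT, one_mul]
  have heq : heat d T f x - f x = ∫ z, heatKernel d T z * (f (x - z) - f x) := by
    rw [heat_eq_integral_heatKernel_mul, ← hconst,
      ← integral_sub hshift ((integrable_heatKernel hT).mul_const _), hconst]
    simp only [mul_sub]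
  rw [heq, ← norm_eq_abs]
  calc ‖∫ z, heatKernel d T z * (f (x - z) - f x)‖
      ≤ ∫ z, L * (heatKernel d T z * ‖z‖ ^ α) := by
        refine norm_integral_le_of_norm_le
          ((integrable_heatKernel_mul_rpow hT hα0 hα2).const_mul L) (.of_forall fun z => ?_)
        have hfz : |f (x - z) - f x| ≤ L * ‖z‖ ^ α := by
          simpa [dist_eq_norm] using hLf (x - z) x
        rw [norm_mul, norm_of_nonneg (heatKernel_nonneg hT z), norm_eq_abs]
        nlinarith [mul_le_mul_of_nonneg_left hfz (heatKernel_nonneg hT z)]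
    _ = L * ∫ z, heatKernel d T z * ‖z‖ ^ α := integral_const_mul _ _
    _ ≤ L * (8 * 2 ^ ((d : ℝ) / 2) * √T ^ α) := by
        gcongr; exact integral_heatKernel_mul_rpow_le hT hα0 hα2
    _ = 8 * 2 ^ ((d : ℝ) / 2) * L * √T ^ α := by ring

lemma abs_heat_sub_heat_le (hT : 0 < T) (hf : Continuous f) (hM : ∀ x, |f x| ≤ M)
    (hLf : ∀ x y, |f x - f y| ≤ L * dist x y ^ α) (x y : EuclideanSpace ℝ (Fin d)) :
    |heat d T f x - heat d T f y| ≤ L * dist x y ^ α := by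
  have hint : ∀ x, Integrable (fun z => heatKernel d T z * f (x - z)) := fun x =>
    integrable_heatKernel_mul hT (hf.comp (continuous_const.sub continuous_id)) fun _ => hM _
  rw [heat_eq_integral_heatKernel_mul, heat_eq_integral_heatKernel_mul,
    ← integral_sub (hint x) (hint y), ← norm_eq_abs]
  calc ‖∫ z, heatKernel d T z * f (x - z) - heatKernel d T z * f (y - z)‖
      ≤ ∫ z, heatKernel d T z * (L * dist x y ^ α) := by
        refine norm_integral_le_of_norm_le ((integrable_heatKernel hT).mul_const _)
          (.of_forall fun z => ?_)
        have hfz : ‖f (x - z) - f (y - z)‖ ≤ L * dist x y ^ α := by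
          simpa only [dist_sub_right, norm_eq_abs] using hLf (x - z) (y - z)
        rw [← mul_sub, norm_mul, norm_of_nonneg (heatKernel_nonneg hT z)]
        exact mul_le_mul_of_nonneg_left hfz (heatKernel_nonneg hT z)
    _ = L * dist x y ^ α := by rw [integral_mul_const, integral_heatKernel hT, one_mul]

end HeatKernel

lemma abs_sub_le_toReal_supN_deriv_mul {a : ℝ → ℝ} (ha : Differentiable ℝ a)
    (h : supN (deriv a) ≠ ⊤) (s t : ℝ) :
    |a s - a t| ≤ (supN (deriv a)).toReal * |s - t| := by
  simpa only [norm_eq_abs] using Convex.norm_image_sub_le_of_norm_deriv_le (s := Set.univ)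
    (fun x _ => ha x) (fun x _ => abs_le_toReal_supN h x) convex_univ (Set.mem_univ t)
    (Set.mem_univ s)

theorem stmt_10_general (d : ℕ) (α β : ℝ) (hα0 : 0 < α) (hα1 : α ≤ 1)
    (hβ0 : 0 < β) (hβα : β < α) :
    ∃ C : ℝ, 0 < C ∧
      ∀ a : ℝ → ℝ, Differentiable ℝ a → Differentiable ℝ (deriv a) →
        supN a < ⊤ → supN (deriv a) < ⊤ → supN (deriv (deriv a)) < ⊤ →
          ∀ f : EuclideanSpace ℝ (Fin d) → ℝ, Continuous f → supN f < ⊤ → hSemi α f < ⊤ →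
            ∀ T : ℝ, 0 < T → T ≤ 1 →
              hNorm β (fun x => a (f x) - a (heat d T f x)) ≤
                ENNReal.ofReal C * c2Norm a * (1 + hNorm α f) * hNorm α f *
                  ENNReal.ofReal (T ^ ((α - β) / 2)) := by
  set Kd : ℝ := 8 * 2 ^ ((d : ℝ) / 2)
  refine ⟨3 * Kd + 2, by positivity, ?_⟩
  intro a ha _ _ ha' _ f hf hfs hfh T hT hT1
  set K := (supN (deriv a)).toReal
  set L := (hSemi α f).toReal
  have hLf := abs_sub_le_toReal_hSemi_mul hα0 hfh.ne
  have hM := abs_le_toReal_supN hfs.ne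
  calc hNorm β (fun x => a (f x) - a (heat d T f x))
      ≤ ENNReal.ofReal ((3 * (Kd * L) + 2 * L) * K * √T ^ (α - β)) :=
        hNorm_comp_sub_comp_le ENNReal.toReal_nonneg ENNReal.toReal_nonneg (by positivity)
          (sqrt_pos.2 hT) (sqrt_le_one.2 hT1) hβ0.le hβα.le
          (abs_sub_le_toReal_supN_deriv_mul ha ha'.ne)
          (fun x => (abs_sub_comm _ _).trans_le
            (abs_heat_sub_le hT hf hM hα0.le (by linarith) ENNReal.toReal_nonneg hLf x))
          hLf (abs_heat_sub_heat_le hT hf hM hLf)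
    _ = ENNReal.ofReal (3 * Kd + 2) * ENNReal.ofReal K * ENNReal.ofReal L *
          ENNReal.ofReal (T ^ ((α - β) / 2)) := by
        rw [← ENNReal.ofReal_mul (by positivity), ← ENNReal.ofReal_mul (by positivity),
          ← ENNReal.ofReal_mul (by positivity), sqrt_eq_rpow, ← rpow_mul hT.le]
        congr 1; ring_nf
    _ ≤ ENNReal.ofReal (3 * Kd + 2) * (c2Norm a * (1 + hNorm α f)) * hNorm α f *
          ENNReal.ofReal (T ^ ((α - β) / 2)) := by
        gcongr
        · exact ENNReal.ofReal_toReal_le.trans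
            ((le_add_self.trans le_self_add).trans (le_mul_of_one_le_right' le_self_add))
        · exact ENNReal.ofReal_toReal_le.trans le_add_self
    _ = ENNReal.ofReal (3 * Kd + 2) * c2Norm a * (1 + hNorm α f) * hNorm α f *
          ENNReal.ofReal (T ^ ((α - β) / 2)) := by ring

theorem stmt_10 (d : ℕ) (hd : 1 ≤ d) (α β : ℝ) (hα0 : 0 < α) (hα1 : α ≤ 1)
    (hβ0 : 0 < β) (hβα : β < α) :
    ∃ C : ℝ, 0 < C ∧
      ∀ a : ℝ → ℝ, Differentiable ℝ a → Differentiable ℝ (deriv a) →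
        supN a < ⊤ → supN (deriv a) < ⊤ → supN (deriv (deriv a)) < ⊤ →
          ∀ f : EuclideanSpace ℝ (Fin d) → ℝ, Continuous f → supN f < ⊤ → hSemi α f < ⊤ →
            ∀ T : ℝ, 0 < T → T ≤ 1 →
              hNorm β (fun x => a (f x) - a (heat d T f x)) ≤
                ENNReal.ofReal C * c2Norm a * (1 + hNorm α f) * hNorm α f *
                  ENNReal.ofReal (T ^ ((α - β) / 2)) :=
  stmt_10_general d α β hα0 hα1 hβ0 hβα
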